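/- arXiv:1707.06847 — 2 statements merged into one kernel-verified Lean document; each statement's English description precedes it below -/
import Mathlib

section
/- Let X and Y be complex Banach spaces and suppose that the set Γ_s of strong peak points for A_{w*u}(B_{X*}) with respect to the norm is norm dense in S_{X*}. Then for every ε ∈ (0, 1) there exists η(ε) > 0 such that whenever f ∈ A_{w*u}(B_{X*}, Y) with ‖f‖∞ = 1 and x₀* ∈ S_{X*} satisfy ‖f(x₀*)‖_Y > 1 − η(ε), there exist g ∈ A_{w*u}(B_{X*}, Y) with ‖g‖∞ = 1 and x₁* ∈ S_{X*} such that ‖g(x₁*)‖_Y = 1, ‖g − f‖∞ < ε and ‖x₁* − x₀*‖ < ε. -/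
/-!
Near `x₀` pick a strong peak point `z` at which `‖f‖` is still close to `1`, and add to `f` a small
multiple of a high power of the peak function at `z`, pointing in the direction of `f z`. The new
function `g₀` exceeds `1` in norm at `z` but not far from `z`, so all its norm-attaining points lie
near `z`; by the maximum modulus principle one of them lies on the unit sphere, and `g₀`
divided by its norm is the required `g`.
-/

open NormedSpace Metric Filter Topology

noncomputable section

variable {X Y : Type*} [NormedAddCommGroup X] [NormedSpace ℂ X]
  [NormedAddCommGroup Y] [NormedSpace ℂ Y]

/-- Membership in `A_{w*u}(B_{X*}, Y)`: `f` is weak-*-to-norm continuous on the closed unit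
ball of the dual (equivalently, weak-* uniformly continuous, as the ball is weak-* compact)
and holomorphic on the open unit ball. -/
def MemAwsu (f : StrongDual ℂ X → Y) : Prop :=
  ContinuousOn (fun φ : WeakDual ℂ X => f (WeakDual.toStrongDual φ))
      {φ : WeakDual ℂ X | ‖WeakDual.toStrongDual φ‖ ≤ 1}
    ∧ DifferentiableOn ℂ f (ball (0 : StrongDual ℂ X) 1)

/-- The supremum norm `‖f‖_∞ = sup {‖f x*‖ : x* ∈ B_{X*}}`. -/
def supNorm (f : StrongDual ℂ X → Y) : ℝ :=
  ⨆ x : closedBall (0 : StrongDual ℂ X) 1, ‖f (x : StrongDual ℂ X)‖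

/-- `x₀` is a strong peak point for `A_{w*u}(B_{X*})` with respect to the norm. -/
def IsNormStrongPeakPoint (x₀ : StrongDual ℂ X) : Prop :=
  ∃ f : StrongDual ℂ X → ℂ, MemAwsu f ∧ supNorm f = 1 ∧ ‖f x₀‖ = 1 ∧
    ∀ δ > 0, ∃ c < 1, ∀ y ∈ closedBall (0 : StrongDual ℂ X) 1, δ ≤ ‖y - x₀‖ → ‖f y‖ ≤ c

theorem ContinuousWithinAt.exists_mem_dist_lt {α β : Type*} [PseudoMetricSpace α]
    [PseudoMetricSpace β] {f : α → β} {s t : Set α} {x : α} (hf : ContinuousWithinAt f s x)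
    (hts : t ⊆ s) (hx : x ∈ closure t) {δ η : ℝ} (hδ : 0 < δ) (hη : 0 < η) :
    ∃ z ∈ t, dist z x < δ ∧ dist (f z) (f x) < η := by
  have := mem_closure_iff_nhdsWithin_neBot.1 hx
  have hnear : ∀ᶠ z in 𝓝[t] x, dist z x < δ :=
    nhdsWithin_le_nhds (ball_mem_nhds x hδ)
  have hclose : ∀ᶠ z in 𝓝[t] x, dist (f z) (f x) < η :=
    Metric.tendsto_nhds.1 (hf.mono hts).tendsto η hη
  exact (eventually_mem_nhdsWithin.and (hnear.and hclose)).exists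

theorem exists_mem_sphere_isMaxOn_norm {E F : Type*} [NormedAddCommGroup E] [NormedSpace ℂ E]
    [Nontrivial E] [NormedAddCommGroup F] [NormedSpace ℂ F] {g : E → F} {c m : E} {r : ℝ}
    (hd : DifferentiableOn ℂ g (ball c r)) (hc : ContinuousOn g (closedBall c r))
    (hm : m ∈ closedBall c r) (hmax : IsMaxOn (‖g ·‖) (closedBall c r) m) :
    ∃ w ∈ sphere c r, IsMaxOn (‖g ·‖) (closedBall c r) w := by
  rcases (mem_closedBall.1 hm).eq_or_lt with hmr | hmr
  · exact ⟨m, mem_sphere.2 hmr, hmax⟩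
  have hr : r ≠ 0 := (dist_nonneg.trans_lt hmr).ne'
  obtain ⟨w, hw⟩ := (NormedSpace.sphere_nonempty (x := c)).2 (dist_nonneg.trans hmr.le)
  have hconst := Complex.norm_eqOn_closure_of_isPreconnected_of_isMaxOn
    (convex_ball c r).isPreconnected isOpen_ball
    ⟨hd, by rwa [closure_ball c hr]⟩ (mem_ball.2 hmr) (hmax.on_subset ball_subset_closedBall)
  rw [closure_ball c hr] at hconst
  refine ⟨w, hw, fun y hy => ?_⟩
  have hgw : ‖g w‖ = ‖g m‖ := hconst (sphere_subset_closedBall hw)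
  simpa [hgw] using hmax hy

theorem norm_inv_smul_sub_le {E : Type*} [SeminormedAddCommGroup E] [NormedSpace ℝ E] {S : ℝ}
    {v : E} (hS : 1 ≤ S) (hv : ‖v‖ ≤ S) : ‖S⁻¹ • v - v‖ ≤ S - 1 := by
  have hS0 : 0 < S := one_pos.trans_le hS
  have hinv : S⁻¹ ≤ 1 := inv_le_one_of_one_le₀ hS
  calc ‖S⁻¹ • v - v‖ = (1 - S⁻¹) * ‖v‖ := by
        rw [show S⁻¹ • v - v = (S⁻¹ - 1) • v by rw [sub_smul, one_smul], norm_smul,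
          Real.norm_of_nonpos (by linarith), neg_sub]
    _ ≤ (1 - S⁻¹) * S := by gcongr
    _ = S - 1 := by field_simp

omit [NormedSpace ℂ Y] in
theorem supNorm_eq_of_isMaxOn {F : StrongDual ℂ X → Y} {m : StrongDual ℂ X}
    (hm : m ∈ closedBall 0 1) (hmax : IsMaxOn (‖F ·‖) (closedBall 0 1) m) :
    supNorm F = ‖F m‖ := by
  have hbdd : BddAbove (Set.range fun y : closedBall (0 : StrongDual ℂ X) 1 => ‖F y‖) :=
    ⟨‖F m‖, by rintro _ ⟨y, rfl⟩; exact hmax y.2⟩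
  have : Nonempty (closedBall (0 : StrongDual ℂ X) 1) := ⟨⟨m, hm⟩⟩
  exact le_antisymm (ciSup_le fun y => hmax y.2) (le_ciSup hbdd ⟨m, hm⟩)

omit [NormedSpace ℂ Y] in
theorem supNorm_le {F : StrongDual ℂ X → Y} {C : ℝ}
    (hC : ∀ y ∈ closedBall (0 : StrongDual ℂ X) 1, ‖F y‖ ≤ C) : supNorm F ≤ C := by
  have : Nonempty (closedBall (0 : StrongDual ℂ X) 1) := ⟨⟨0, by simp⟩⟩
  exact ciSup_le fun y => hC y y.2

namespace MemAwsu

variable {f g : StrongDual ℂ X → Y}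

theorem continuousOn (hf : MemAwsu f) : ContinuousOn f (closedBall 0 1) :=
  hf.1.comp NormedSpace.Dual.toWeakDual_continuous.continuousOn
    fun y hy => show ‖y‖ ≤ 1 by simpa using hy

theorem exists_isMaxOn (hf : MemAwsu f) :
    ∃ m ∈ closedBall 0 1, IsMaxOn (‖f ·‖) (closedBall 0 1) m := by
  have hK : IsCompact {φ : WeakDual ℂ X | ‖WeakDual.toStrongDual φ‖ ≤ 1} := by
    simpa [Set.preimage, mem_closedBall_zero_iff] using
      WeakDual.isCompact_closedBall (0 : StrongDual ℂ X) 1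
  obtain ⟨ψ, hψ, hmax⟩ := hK.exists_isMaxOn ⟨0, by simp⟩ hf.1.norm
  exact ⟨WeakDual.toStrongDual ψ, by simpa using hψ,
    fun y hy => hmax (show ‖y‖ ≤ 1 by simpa using hy)⟩

theorem exists_mem_sphere_isMaxOn [Nontrivial (StrongDual ℂ X)] (hf : MemAwsu f) :
    ∃ w ∈ sphere 0 1, IsMaxOn (‖f ·‖) (closedBall 0 1) w := by
  obtain ⟨m, hm, hmax⟩ := hf.exists_isMaxOn
  exact exists_mem_sphere_isMaxOn_norm hf.2 hf.continuousOn hm hmax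

theorem norm_le_supNorm (hf : MemAwsu f) {y : StrongDual ℂ X} (hy : y ∈ closedBall 0 1) :
    ‖f y‖ ≤ supNorm f := by
  obtain ⟨m, hm, hmax⟩ := hf.exists_isMaxOn
  rw [supNorm_eq_of_isMaxOn hm hmax]
  exact hmax hy

theorem add (hf : MemAwsu f) (hg : MemAwsu g) : MemAwsu fun y => f y + g y :=
  ⟨hf.1.add hg.1, hf.2.add hg.2⟩

theorem const_smul (c : ℂ) (hf : MemAwsu f) : MemAwsu fun y => c • f y :=
  ⟨hf.1.const_smul c, hf.2.const_smul c⟩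

theorem smul_const {φ : StrongDual ℂ X → ℂ} (hφ : MemAwsu φ) (v : Y) :
    MemAwsu fun y => φ y • v :=
  ⟨hφ.1.smul continuousOn_const, hφ.2.smul (differentiableOn_const v)⟩

theorem pow {φ : StrongDual ℂ X → ℂ} (hφ : MemAwsu φ) (n : ℕ) : MemAwsu fun y => φ y ^ n :=
  ⟨hφ.1.pow n, hφ.2.pow n⟩

theorem exists_normalization {g₀ : StrongDual ℂ X → Y} (hg₀ : MemAwsu g₀) {w : StrongDual ℂ X}
    (hw : w ∈ closedBall 0 1) (hmax : IsMaxOn (‖g₀ ·‖) (closedBall 0 1) w) (hS : 1 ≤ ‖g₀ w‖)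
    {t : ℝ} (hg₀f : ∀ y ∈ closedBall (0 : StrongDual ℂ X) 1, ‖g₀ y - f y‖ ≤ t) :
    ∃ g, MemAwsu g ∧ supNorm g = 1 ∧ ‖g w‖ = 1 ∧
      supNorm (fun y => g y - f y) ≤ ‖g₀ w‖ - 1 + t := by
  set S := ‖g₀ w‖
  have hS0 : 0 < S := one_pos.trans_le hS
  have hnorm : ∀ y, ‖(S⁻¹ : ℝ) • g₀ y‖ = S⁻¹ * ‖g₀ y‖ := fun y => by
    rw [norm_smul, Real.norm_of_nonneg (inv_nonneg.2 hS0.le)]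
  have hgw : ‖(S⁻¹ : ℝ) • g₀ w‖ = 1 := by rw [hnorm, inv_mul_cancel₀ hS0.ne']
  refine ⟨fun y => (S⁻¹ : ℝ) • g₀ y, ?_, ?_, hgw, supNorm_le fun y hy => ?_⟩
  · simpa only [Complex.coe_smul] using hg₀.const_smul (S⁻¹ : ℝ)
  · refine (supNorm_eq_of_isMaxOn hw fun y hy => ?_).trans hgw
    change ‖_‖ ≤ ‖_‖
    rw [hnorm, hnorm]
    exact mul_le_mul_of_nonneg_left (hmax hy) (inv_nonneg.2 hS0.le)
  · calc ‖S⁻¹ • g₀ y - f y‖ ≤ ‖S⁻¹ • g₀ y - g₀ y‖ + ‖g₀ y - f y‖ :=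
          norm_sub_le_norm_sub_add_norm_sub _ _ _
      _ ≤ S - 1 + t := add_le_add (norm_inv_smul_sub_le hS (hmax hy)) (hg₀f y hy)

end MemAwsu

namespace IsNormStrongPeakPoint

variable {z : StrongDual ℂ X}

theorem exists_peak_eq_one (hz : IsNormStrongPeakPoint z) {δ r : ℝ} (hδ : 0 < δ) (hr : 0 < r) :
    ∃ φ : StrongDual ℂ X → ℂ, MemAwsu φ ∧ φ z = 1 ∧
      (∀ y ∈ closedBall (0 : StrongDual ℂ X) 1, ‖φ y‖ ≤ 1) ∧
      ∀ y ∈ closedBall (0 : StrongDual ℂ X) 1, δ ≤ ‖y - z‖ → ‖φ y‖ ≤ r := by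
  obtain ⟨Φ, hΦ, hΦsup, hΦz, hpeak⟩ := hz
  obtain ⟨c, hc1, hc⟩ := hpeak δ hδ
  obtain ⟨M, hM⟩ := exists_pow_lt_of_lt_one hr (max_lt hc1 one_pos)
  have hΦz0 : Φ z ^ M ≠ 0 := pow_ne_zero M (norm_pos_iff.1 (hΦz ▸ one_pos))
  have hnorm : ∀ y, ‖(Φ z ^ M)⁻¹ • Φ y ^ M‖ = ‖Φ y‖ ^ M := fun y => by
    rw [norm_smul, norm_inv, norm_pow, norm_pow, hΦz, one_pow, inv_one, one_mul]
  refine ⟨fun y => (Φ z ^ M)⁻¹ • Φ y ^ M, (hΦ.pow M).const_smul _,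
    by simp [hΦz0], fun y hy => ?_, fun y hy hyz => ?_⟩
  · rw [hnorm]
    exact pow_le_one₀ (norm_nonneg _) (hΦsup ▸ hΦ.norm_le_supNorm hy)
  · rw [hnorm]
    calc ‖Φ y‖ ^ M ≤ max c 0 ^ M := by gcongr; exact (hc y hy hyz).trans (le_max_left _ _)
      _ ≤ r := hM.le

/-- The perturbation `f + t φ u`, with `φ` a normalized peak function at `z` and `u` the unit
vector in the direction of `f z`. -/
theorem exists_perturbation (hz : IsNormStrongPeakPoint z) {f : StrongDual ℂ X → Y}
    (hf : MemAwsu f) (hfz : f z ≠ 0) {t δ : ℝ} (ht : 0 ≤ t) (hδ : 0 < δ) :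
    ∃ g, MemAwsu g ∧ (∀ y ∈ closedBall (0 : StrongDual ℂ X) 1, ‖g y - f y‖ ≤ t) ∧
      ‖g z‖ = ‖f z‖ + t ∧
      ∀ y ∈ closedBall (0 : StrongDual ℂ X) 1, δ ≤ ‖y - z‖ → ‖g y‖ ≤ ‖f y‖ + t / 2 := by
  obtain ⟨φ, hφ, hφz, hφ1, hφfar⟩ := hz.exists_peak_eq_one hδ (r := 1 / 2) (by norm_num)
  set u : Y := ‖f z‖⁻¹ • f z
  have hfz0 : 0 < ‖f z‖ := norm_pos_iff.2 hfz
  have hu : ‖u‖ = 1 := by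
    rw [norm_smul, norm_inv, norm_norm, inv_mul_cancel₀ hfz0.ne']
  have hdiff : ∀ y, ‖f y + (t * φ y) • u - f y‖ = t * ‖φ y‖ := fun y => by
    rw [add_sub_cancel_left, norm_smul, hu, mul_one, norm_mul, Complex.norm_real,
      Real.norm_of_nonneg ht]
  refine ⟨fun y => f y + ((t : ℂ) * φ y) • u, hf.add ((hφ.const_smul (t : ℂ)).smul_const u),
    fun y hy => ?_, ?_, fun y hy hyz => ?_⟩
  · rw [hdiff]
    exact mul_le_of_le_one_right ht (hφ1 y hy)
  · have hray : SameRay ℝ (f z) ((t * ‖f z‖⁻¹) • f z) :=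
      SameRay.sameRay_nonneg_smul_right _ (by positivity)
    change ‖f z + ((t : ℂ) * φ z) • u‖ = _
    rw [hφz, mul_one, Complex.coe_smul, smul_smul, hray.norm_add, norm_smul,
      Real.norm_of_nonneg (by positivity), inv_mul_cancel_right₀ hfz0.ne']
  · calc ‖f y + ((t : ℂ) * φ y) • u‖ ≤ ‖f y‖ + ‖f y + ((t : ℂ) * φ y) • u - f y‖ :=
          norm_le_norm_add_norm_sub' _ _
      _ ≤ ‖f y‖ + t / 2 := by
          rw [hdiff]; linarith [mul_le_mul_of_nonneg_left (hφfar y hy hyz) ht]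

end IsNormStrongPeakPoint

theorem bpb_Awsu_vector_valued_general (X Y : Type*)
    [NormedAddCommGroup X] [NormedSpace ℂ X]
    [NormedAddCommGroup Y] [NormedSpace ℂ Y]
    (hdense : sphere (0 : StrongDual ℂ X) 1 ⊆
      closure {z : StrongDual ℂ X | ‖z‖ = 1 ∧ IsNormStrongPeakPoint z}) :
    ∀ ε ∈ Set.Ioo (0 : ℝ) 1, ∃ η > 0,
      ∀ f : StrongDual ℂ X → Y, MemAwsu f → supNorm f = 1 →
        ∀ x₀ : StrongDual ℂ X, ‖x₀‖ = 1 → 1 - η < ‖f x₀‖ →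
          ∃ g : StrongDual ℂ X → Y, ∃ x₁ : StrongDual ℂ X, MemAwsu g ∧ supNorm g = 1 ∧ ‖x₁‖ = 1 ∧
            ‖g x₁‖ = 1 ∧ supNorm (fun y => g y - f y) < ε ∧ ‖x₁ - x₀‖ < ε := by
  rintro ε ⟨hε, hε1⟩
  refine ⟨ε / 64, by positivity, fun f hf hfsup x₀ hx₀ hfx₀ => ?_⟩
  have hB : ∀ {y : StrongDual ℂ X}, ‖y‖ = 1 → y ∈ closedBall 0 1 :=
    fun hy => mem_closedBall_zero_iff.2 hy.le
  have hf1 : ∀ y ∈ closedBall (0 : StrongDual ℂ X) 1, ‖f y‖ ≤ 1 :=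
    fun y hy => hfsup ▸ hf.norm_le_supNorm hy
  obtain ⟨z, ⟨hz1, hz⟩, hzx₀, hfz⟩ := (hf.continuousOn x₀ (hB hx₀)).exists_mem_dist_lt
    (fun y hy => hB hy.1) (hdense (mem_sphere_zero_iff_norm.2 hx₀))
    (half_pos hε) (by positivity : 0 < ε / 64)
  rw [dist_eq_norm] at hzx₀ hfz
  have hfz_gt : 1 - ε / 32 < ‖f z‖ := by linarith [norm_le_norm_add_norm_sub (f z) (f x₀)]
  obtain ⟨g₀, hg₀, hg₀f, hg₀z, hg₀far⟩ := hz.exists_perturbation hf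
    (norm_pos_iff.1 (by linarith)) (by positivity : 0 ≤ ε / 8) (by positivity : 0 < ε / 4)
  have : Nontrivial (StrongDual ℂ X) := nontrivial_of_ne x₀ 0 (by rintro rfl; simp at hx₀)
  obtain ⟨w, hw, hmax⟩ := hg₀.exists_mem_sphere_isMaxOn
  have hw1 : ‖w‖ = 1 := mem_sphere_zero_iff_norm.1 hw
  have hS : ‖f z‖ + ε / 8 ≤ ‖g₀ w‖ := hg₀z ▸ hmax (hB hz1)
  have hwz : ‖w - z‖ < ε / 4 := by
    by_contra! hfar
    linarith [hg₀far w (hB hw1) hfar, hf1 w (hB hw1)]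
  obtain ⟨g, hg, hgsup, hgw, hgf⟩ := hg₀.exists_normalization (hB hw1) hmax (by linarith) hg₀f
  refine ⟨g, w, hg, hgsup, hw1, hgw, ?_, ?_⟩
  · linarith [norm_le_norm_add_norm_sub' (g₀ w) (f w), hg₀f w (hB hw1), hf1 w (hB hw1)]
  · linarith [norm_sub_le_norm_sub_add_norm_sub w z x₀]

/-- Vector-valued Bishop-Phelps-Bollobás theorem for `A_{w*u}(B_{X*}, Y)`. -/
theorem bpb_Awsu_vector_valued (X Y : Type*)
    [NormedAddCommGroup X] [NormedSpace ℂ X] [CompleteSpace X]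
    [NormedAddCommGroup Y] [NormedSpace ℂ Y] [CompleteSpace Y]
    (hdense : sphere (0 : StrongDual ℂ X) 1 ⊆
      closure {z : StrongDual ℂ X | ‖z‖ = 1 ∧ IsNormStrongPeakPoint z}) :
    ∀ ε ∈ Set.Ioo (0 : ℝ) 1, ∃ η > 0,
      ∀ f : StrongDual ℂ X → Y, MemAwsu f → supNorm f = 1 →
        ∀ x₀ : StrongDual ℂ X, ‖x₀‖ = 1 → 1 - η < ‖f x₀‖ →
          ∃ g : StrongDual ℂ X → Y, ∃ x₁ : StrongDual ℂ X, MemAwsu g ∧ supNorm g = 1 ∧ ‖x₁‖ = 1 ∧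
            ‖g x₁‖ = 1 ∧ supNorm (fun y => g y - f y) < ε ∧ ‖x₁ - x₀‖ < ε :=
  bpb_Awsu_vector_valued_general X Y hdense
end
end

section
/- Let X be a reflexive complex Banach space whose dual X* is locally uniformly convex. Then Γ_s = S_{X*}, i.e. every point of the unit sphere of X* is a strong peak point for A_{w*u}(B_{X*}) with respect to the norm. -/
/-!
Pick `x ∈ S_X` with `x₀ x = 1` (reflexivity turns a norming functional of `x₀` into a point
of `X`) and peak with `f y = (1 + y x) / 2`. It is affine in the evaluation at `x`, hence
weak-* continuous and entire, and `|f y| = |((x₀ + y) / 2) x| ≤ ‖(x₀ + y) / 2‖`. So if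
`|f yₙ| → 1` then `‖(x₀ + yₙ) / 2‖ → 1`, and local uniform convexity at `x₀` forces `yₙ → x₀`.
-/


open NormedSpace Metric Filter Topology

noncomputable section

variable {X Y : Type*} [NormedAddCommGroup X] [NormedSpace ℂ X]
  [NormedAddCommGroup Y] [NormedSpace ℂ Y]

theorem exists_norm_eq_one_apply_eq_norm_of_surjective_inclusionInDoubleDual
    {𝕜 E : Type*} [RCLike 𝕜] [NormedAddCommGroup E] [NormedSpace 𝕜 E]
    (hrefl : Function.Surjective (inclusionInDoubleDual 𝕜 E))
    {x₀ : StrongDual 𝕜 E} (hx₀ : x₀ ≠ 0) : ∃ x : E, ‖x‖ = 1 ∧ x₀ x = ‖x₀‖ := by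
  obtain ⟨g, hg_norm, hg_apply⟩ := exists_dual_vector 𝕜 x₀ (norm_ne_zero_iff.mpr hx₀)
  obtain ⟨x, rfl⟩ := hrefl g
  exact ⟨x, hg_norm ▸ ((inclusionInDoubleDualLi 𝕜).norm_map x).symm, hg_apply⟩

theorem supNorm_eq_of_forall_norm_le {Z : Type*} [NormedAddCommGroup Z]
    {f : StrongDual ℂ X → Z} {c : ℝ}
    (hle : ∀ y ∈ closedBall (0 : StrongDual ℂ X) 1, ‖f y‖ ≤ c)
    {x₀ : StrongDual ℂ X} (hx₀ : ‖x₀‖ ≤ 1) (hfx₀ : ‖f x₀‖ = c) : supNorm f = c := by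
  have hx₀_mem : x₀ ∈ closedBall (0 : StrongDual ℂ X) 1 := mem_closedBall_zero_iff.mpr hx₀
  refine le_antisymm (ciSup_le fun y => hle y y.2) ?_
  rw [← hfx₀]
  exact le_ciSup (f := fun y : closedBall (0 : StrongDual ℂ X) 1 => ‖f y‖)
    ⟨c, Set.forall_mem_range.mpr fun y => hle y y.2⟩ ⟨x₀, hx₀_mem⟩

theorem norm_midpoint_le_one {E : Type*} [NormedAddCommGroup E] [NormedSpace ℂ E] {x y : E}
    (hx : ‖x‖ ≤ 1) (hy : ‖y‖ ≤ 1) : ‖(2 : ℂ)⁻¹ • (x + y)‖ ≤ 1 := by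
  calc ‖(2 : ℂ)⁻¹ • (x + y)‖ ≤ 2⁻¹ * (‖x‖ + ‖y‖) := by
        rw [norm_smul, norm_inv, Complex.norm_two]
        exact mul_le_mul_of_nonneg_left (norm_add_le x y) (by norm_num)
    _ ≤ 1 := by linarith

theorem exists_lt_one_forall_le_of_le_norm_midpoint {E : Type*} [NormedAddCommGroup E]
    [NormedSpace ℂ E] {x₀ : E} (hx₀ : ‖x₀‖ ≤ 1)
    (hLUR : ∀ y : ℕ → E, (∀ n, ‖y n‖ ≤ 1) →
      Tendsto (fun n => ‖(2 : ℂ)⁻¹ • (x₀ + y n)‖) atTop (𝓝 1) →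
      Tendsto (fun n => ‖y n - x₀‖) atTop (𝓝 0))
    {g : E → ℝ} (hg : ∀ y ∈ closedBall (0 : E) 1, g y ≤ ‖(2 : ℂ)⁻¹ • (x₀ + y)‖)
    {δ : ℝ} (hδ : 0 < δ) : ∃ c < 1, ∀ y ∈ closedBall (0 : E) 1, δ ≤ ‖y - x₀‖ → g y ≤ c := by
  by_contra! hfar
  obtain ⟨c, -, hc_lt, hc_lim⟩ := exists_seq_strictMono_tendsto' (zero_lt_one' ℝ)
  choose y hy_mem hy_far hy_large using fun n => hfar (c n) (hc_lt n).2
  have hy_norm : ∀ n, ‖y n‖ ≤ 1 := fun n => mem_closedBall_zero_iff.mp (hy_mem n)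
  have hmid : Tendsto (fun n => ‖(2 : ℂ)⁻¹ • (x₀ + y n)‖) atTop (𝓝 1) :=
    tendsto_of_tendsto_of_tendsto_of_le_of_le hc_lim tendsto_const_nhds
      (fun n => (hy_large n).le.trans (hg _ (hy_mem n)))
      (fun n => norm_midpoint_le_one hx₀ (hy_norm n))
  have : δ ≤ 0 := ge_of_tendsto' (hLUR y hy_norm hmid) hy_far
  linarith

def peakFunction (x : X) (y : StrongDual ℂ X) : ℂ :=
  2⁻¹ * (1 + y x)

theorem memAwsu_peakFunction (x : X) : MemAwsu (peakFunction x) := by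
  refine ⟨Continuous.continuousOn ?_, Differentiable.differentiableOn ?_⟩
  · exact continuous_const.mul (continuous_const.add (WeakDual.eval_continuous x))
  · exact (differentiable_const _).mul
      ((differentiable_const _).add (ContinuousLinearMap.apply ℂ ℂ x).differentiable)

theorem peakFunction_eq_apply_midpoint {x : X} {x₀ : StrongDual ℂ X} (hx₀ : x₀ x = 1)
    (y : StrongDual ℂ X) : peakFunction x y = ((2 : ℂ)⁻¹ • (x₀ + y)) x := by
  simp [peakFunction, hx₀, mul_add]

theorem norm_peakFunction_le {x : X} (hx : ‖x‖ ≤ 1) {x₀ : StrongDual ℂ X} (hx₀ : x₀ x = 1)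
    (y : StrongDual ℂ X) : ‖peakFunction x y‖ ≤ ‖(2 : ℂ)⁻¹ • (x₀ + y)‖ := by
  rw [peakFunction_eq_apply_midpoint hx₀]
  calc ‖((2 : ℂ)⁻¹ • (x₀ + y)) x‖ ≤ ‖(2 : ℂ)⁻¹ • (x₀ + y)‖ * ‖x‖ :=
        ContinuousLinearMap.le_opNorm _ x
    _ ≤ ‖(2 : ℂ)⁻¹ • (x₀ + y)‖ := mul_le_of_le_one_right (norm_nonneg _) hx

theorem reflexive_LUR_Gamma_s_eq_sphere_general
    (X : Type*) [NormedAddCommGroup X] [NormedSpace ℂ X]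
    (hrefl : Function.Surjective (NormedSpace.inclusionInDoubleDual ℂ X))
    (hLUR : ∀ x : StrongDual ℂ X, ‖x‖ = 1 → ∀ y : ℕ → StrongDual ℂ X, (∀ n, ‖y n‖ ≤ 1) →
      Tendsto (fun n => ‖(2 : ℂ)⁻¹ • (x + y n)‖) atTop (𝓝 1) →
      Tendsto (fun n => ‖y n - x‖) atTop (𝓝 0)) :
    ∀ x₀ : StrongDual ℂ X, ‖x₀‖ = 1 → IsNormStrongPeakPoint x₀ := by
  intro x₀ hx₀
  obtain ⟨x, hx, hx₀x⟩ := exists_norm_eq_one_apply_eq_norm_of_surjective_inclusionInDoubleDual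
    hrefl (norm_ne_zero_iff.mp (hx₀.trans_ne one_ne_zero))
  replace hx₀x : x₀ x = 1 := by simpa [hx₀] using hx₀x
  have hf_le : ∀ y : StrongDual ℂ X, ‖peakFunction x y‖ ≤ ‖(2 : ℂ)⁻¹ • (x₀ + y)‖ :=
    norm_peakFunction_le hx.le hx₀x
  have hfx₀ : ‖peakFunction x x₀‖ = 1 := by simp [peakFunction, hx₀x]; norm_num
  refine ⟨peakFunction x, memAwsu_peakFunction x, ?_, hfx₀, fun δ hδ => ?_⟩
  · exact supNorm_eq_of_forall_norm_le (fun y hy => (hf_le y).trans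
      (norm_midpoint_le_one hx₀.le (mem_closedBall_zero_iff.mp hy))) hx₀.le hfx₀
  · exact exists_lt_one_forall_le_of_le_norm_midpoint hx₀.le (hLUR x₀ hx₀)
      (fun y _ => hf_le y) hδ

/-- If `X` is a reflexive complex Banach space and `X*` is locally uniformly convex, then
every point of the unit sphere of `X*` is a strong peak point for `A_{w*u}(B_{X*})` with
respect to the norm, i.e. `Γ_s = S_{X*}`. -/
theorem reflexive_LUR_Gamma_s_eq_sphere
    (X : Type*) [NormedAddCommGroup X] [NormedSpace ℂ X] [CompleteSpace X]
    (hrefl : Function.Surjective (NormedSpace.inclusionInDoubleDual ℂ X))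
    (hLUR : ∀ x : StrongDual ℂ X, ‖x‖ = 1 → ∀ y : ℕ → StrongDual ℂ X, (∀ n, ‖y n‖ ≤ 1) →
      Tendsto (fun n => ‖(2 : ℂ)⁻¹ • (x + y n)‖) atTop (𝓝 1) →
      Tendsto (fun n => ‖y n - x‖) atTop (𝓝 0)) :
    ∀ x₀ : StrongDual ℂ X, ‖x₀‖ = 1 → IsNormStrongPeakPoint x₀ :=
  reflexive_LUR_Gamma_s_eq_sphere_general X hrefl hLUR
end
end
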